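/- For the no-signaling box p^NL defined above (d ≥ 2, M ≥ 2), the BKP Bell expression evaluates to zero: I^{M,d}(p^NL) := ∑_{α=1}^{M} (⟨A_α - B_α⟩ + ⟨B_α - A_{α+1}⟩) = 0, where ⟨A_x - B_y⟩ := ∑_{a,b} ((a - b : ZMod d).val) · p^NL(a,b|x,y), ⟨B_y - A_x⟩ := ∑_{a,b} ((b - a : ZMod d).val) · p^NL(a,b|x,y), and the last term uses A_{M+1} = A_1 + 1, i.e. ⟨B_M - A_1 - 1⟩ := ∑_{a,b} ((b - a - 1 : ZMod d).val) · p^NL(a,b|1,M). -/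
import Mathlib


open Finset

noncomputable section

/-- Deterministic bracket `⟨x - y⟩`: the representative in `{0,…,d-1}` of `x - y` mod `d`. -/
def dval (d : ℕ) (x y : Fin d) : ℕ := (((x : ℕ) : ZMod d) - ((y : ℕ) : ZMod d)).val

/-- Shifted deterministic bracket `⟨x - y - 1⟩` mod `d`. -/
def dvalShift (d : ℕ) (x y : Fin d) : ℕ :=
  (((x : ℕ) : ZMod d) - ((y : ℕ) : ZMod d) - 1).val

/-- The BKP Bell expression `I^{M,d}(p) = ∑_α (⟨A_α - B_α⟩ + ⟨B_α - A_{α+1}⟩)` of a bipartite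
box `p(a,b|x,y)`, with the convention `A_{M+1} = A_1 + 1`. -/
def BKP (d M : ℕ) (hM : 0 < M) (p : Fin d → Fin d → Fin M → Fin M → ℝ) : ℝ :=
  ∑ α : Fin M,
    ((∑ a : Fin d, ∑ b : Fin d, (dval d a b : ℝ) * p a b α α) +
      if h : (α : ℕ) + 1 < M then
        ∑ a : Fin d, ∑ b : Fin d, (dval d b a : ℝ) * p a b ⟨(α : ℕ) + 1, h⟩ α
      else
        ∑ a : Fin d, ∑ b : Fin d, (dvalShift d b a : ℝ) * p a b ⟨0, hM⟩ α)

/-- No-signaling conditions for a tripartite box `p(a,b,c|x,y,z)`. -/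
def NoSignalingTri (d M : ℕ)
    (p : Fin d → Fin d → Fin d → Fin M → Fin M → Fin M → ℝ) : Prop :=
  (∀ b c x x' y z, ∑ a, p a b c x y z = ∑ a, p a b c x' y z) ∧
  (∀ a c x y y' z, ∑ b, p a b c x y z = ∑ b, p a b c x y' z) ∧
  (∀ a b x y z z', ∑ c, p a b c x y z = ∑ c, p a b c x y z')

/-- The extremal no-signaling box maximally violating the BKP Bell inequality:
`p^NL(a,b|x,x) = p^NL(a,b|x+1,x) = (1/d)·[a = b]`, `p^NL(a,b|1,M) = (1/d)·[b = a+1 mod d]`,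
and `p^NL(a,b|x,y) = 1/d²` for the remaining inputs (inputs `1,…,M` are indexed by `Fin M`
starting at `0`). -/
def pNL (d M : ℕ) : Fin d → Fin d → Fin M → Fin M → ℝ := fun a b x y =>
  if (x : ℕ) = (y : ℕ) then (if a = b then 1 / d else 0)
  else if (x : ℕ) = (y : ℕ) + 1 then (if a = b then 1 / d else 0)
  else if (x : ℕ) = 0 ∧ (y : ℕ) + 1 = M then
    (if ((b : ℕ) : ZMod d) = ((a : ℕ) : ZMod d) + 1 then 1 / d else 0)
  else 1 / (d ^ 2 : ℝ)

/-- The extremal no-signaling box `p^NL` violates the BKP Bell inequality maximally: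
`I^{M,d}(p^NL) = 0`. -/
theorem bkp_of_pNL_eq_zero (d M : ℕ) (hd : 2 ≤ d) (hM : 2 ≤ M) :
    BKP d M (by omega) (pNL d M) = 0 := by
  haveI : NeZero d := ⟨by omega⟩
  unfold BKP
  apply Finset.sum_eq_zero
  intro α _
  have h1 : ∑ a : Fin d, ∑ b : Fin d, (dval d a b : ℝ) * pNL d M a b α α = 0 := by
    apply Finset.sum_eq_zero; intro a _
    apply Finset.sum_eq_zero; intro b _
    by_cases hab : a = b
    · subst hab
      simp [dval]
    · have hp : pNL d M a b α α = 0 := by simp [pNL, hab]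
      rw [hp, mul_zero]
  rw [h1, zero_add]
  by_cases h : (α : ℕ) + 1 < M
  · rw [dif_pos h]
    apply Finset.sum_eq_zero; intro a _
    apply Finset.sum_eq_zero; intro b _
    by_cases hab : a = b
    · subst hab; simp [dval]
    · have hp : pNL d M a b ⟨(α : ℕ) + 1, h⟩ α = 0 := by
        simp [pNL, hab]
      rw [hp, mul_zero]
  · rw [dif_neg h]
    have hα1 : (α : ℕ) + 1 = M := by have := α.isLt; omega
    have hα0 : (0 : ℕ) ≠ (α : ℕ) := by omega
    apply Finset.sum_eq_zero; intro a _
    apply Finset.sum_eq_zero; intro b _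
    by_cases hba : ((b : ℕ) : ZMod d) = ((a : ℕ) : ZMod d) + 1
    · have hv : (dvalShift d b a : ℝ) = 0 := by
        simp [dvalShift, hba]
      rw [hv, zero_mul]
    · have hp : pNL d M a b ⟨0, by omega⟩ α = 0 := by
        simp [pNL, hba, hα1, hα0, (by omega : (0:ℕ) ≠ (α:ℕ)+1)]
        exact fun hM0 _ => by omega
      rw [hp, mul_zero]
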